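/- arXiv:2008.04971 — 3 statements merged into one kernel-verified Lean document; each statement's English description precedes it below -/
import Mathlib

section
/- Let σ, τ ∈ 𝒩(F₂) be power series whose coefficients of t¹, t², t³, t⁴, t⁵ are respectively 1, 1, 0, 0, 0 for σ and 1, 1, 0, 1, 0 for τ (i.e., σ = t + t² + O(t⁶) and τ = t + t² + t⁴ + O(t⁶)). Then σ and τ are not conjugate in 𝒩(F₂): there is no ψ ∈ 𝒩(F₂) with σ ∘ ψ = ψ ∘ τ. -/
open PowerSeries

abbrev F2 := ZMod 2

/-- Composition of power series `σ ∘ τ` (substitution of `τ` into `σ`), valid when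
`τ` has zero constant coefficient. -/
noncomputable def ngComp (σ τ : PowerSeries F2) : PowerSeries F2 :=
  PowerSeries.mk fun k =>
    ∑ n ∈ Finset.range (k + 1), PowerSeries.coeff n σ * PowerSeries.coeff k (τ ^ n)

/-- Membership in the Nottingham group: `σ ≡ t (mod t²)`. -/
def IsNott (σ : PowerSeries F2) : Prop :=
  PowerSeries.coeff 0 σ = 0 ∧ PowerSeries.coeff 1 σ = 1

/-!
Reduce modulo `t⁶`. Writing `ψ = t + a t² + b t³ + c t⁴ + d t⁵ + O(t⁶)`, one has
`σ ∘ ψ ≡ ψ + ψ²` and `ψ ∘ τ ≡ τ₀ + a τ₀² + b τ₀³ + c τ₀⁴ + d τ₀⁵` with `τ₀ = t + t² + t⁴`.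
In characteristic two `ψ² ≡ t² + a² t⁴`, so comparing the coefficients of `t⁴` gives
`c + a² = 1 + a + b + c`, i.e. `b = 1` since `a² = a` in `F₂`, whereas comparing those of `t⁵`
gives `d = b + d`, i.e. `b = 0`.
-/

open Finset

namespace PowerSeries

variable {R : Type*} [CommSemiring R]

lemma coeff_pow_eq_zero_of_lt {f : R⟦X⟧} (hf : constantCoeff f = 0) {k n : ℕ} (hk : k < n) :
    coeff k (f ^ n) = 0 :=
  X_pow_dvd_iff.1 (pow_dvd_pow_of_dvd (X_dvd_iff.2 hf) n) k hk

lemma coeff_pow_eq_coeff_trunc_pow (f : R⟦X⟧) {k N : ℕ} (hk : k < N) (n : ℕ) :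
    coeff k (f ^ n) = coeff k ((trunc N f : R⟦X⟧) ^ n) := by
  rw [← coeff_coe_trunc_of_lt hk, ← trunc_trunc_pow, coeff_coe_trunc_of_lt hk]

lemma coe_trunc_eq_sum_range (f : R⟦X⟧) (N : ℕ) :
    (trunc N f : R⟦X⟧) = ∑ i ∈ range N, C (coeff i f) * X ^ i := by
  rw [← Polynomial.eval₂_C_X_eq_coe, eval₂_trunc_eq_sum_range]

end PowerSeries

lemma coeff_ngComp_of_lt {σ ψ : PowerSeries F2} (hψ : coeff 0 ψ = 0) {k N : ℕ} (hk : k < N) :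
    coeff k (ngComp σ ψ) =
      coeff k (∑ n ∈ range N, C (coeff n σ) * (∑ i ∈ range N, C (coeff i ψ) * X ^ i) ^ n) := by
  rw [← coe_trunc_eq_sum_range, ngComp, coeff_mk, map_sum]
  simp_rw [coeff_C_mul, ← coeff_pow_eq_coeff_trunc_pow ψ hk]
  refine sum_subset (range_subset_range.2 hk) fun n _ hkn => ?_
  rw [coeff_pow_eq_zero_of_lt (by rwa [← coeff_zero_eq_constantCoeff_apply]) (by simpa using hkn),
    mul_zero]

section

variable (a b c d : F2)

lemma coeff_four_five_add_sq :
    coeff 4 ((X + C a * X ^ 2 + C b * X ^ 3 + C c * X ^ 4 + C d * X ^ 5 : F2⟦X⟧) +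
        (X + C a * X ^ 2 + C b * X ^ 3 + C c * X ^ 4 + C d * X ^ 5) ^ 2) = c + a ^ 2 ∧
      coeff 5 ((X + C a * X ^ 2 + C b * X ^ 3 + C c * X ^ 4 + C d * X ^ 5 : F2⟦X⟧) +
        (X + C a * X ^ 2 + C b * X ^ 3 + C c * X ^ 4 + C d * X ^ 5) ^ 2) = d := by
  ring_nf
  simp [mul_assoc, coeff_X_pow_mul', coeff_X, ← map_ofNat C, ← map_pow, coeff_C]
  decide +revert

lemma coeff_four_five_comp_X_add_X_sq_add_X_pow_four :
    coeff 4 ((X + X ^ 2 + X ^ 4 : F2⟦X⟧) + C a * (X + X ^ 2 + X ^ 4) ^ 2 +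
        C b * (X + X ^ 2 + X ^ 4) ^ 3 + C c * (X + X ^ 2 + X ^ 4) ^ 4 +
        C d * (X + X ^ 2 + X ^ 4) ^ 5) = 1 + a + b + c ∧
      coeff 5 ((X + X ^ 2 + X ^ 4 : F2⟦X⟧) + C a * (X + X ^ 2 + X ^ 4) ^ 2 +
        C b * (X + X ^ 2 + X ^ 4) ^ 3 + C c * (X + X ^ 2 + X ^ 4) ^ 4 +
        C d * (X + X ^ 2 + X ^ 4) ^ 5) = b + d := by
  ring_nf
  simp [mul_assoc, coeff_X_pow_mul', coeff_X, ← map_ofNat C, coeff_C]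
  decide +revert

end

theorem statement1 (σ τ : PowerSeries F2) (hσ : IsNott σ) (hτ : IsNott τ)
    (hσ2 : PowerSeries.coeff 2 σ = 1) (hσ3 : PowerSeries.coeff 3 σ = 0)
    (hσ4 : PowerSeries.coeff 4 σ = 0) (hσ5 : PowerSeries.coeff 5 σ = 0)
    (hτ2 : PowerSeries.coeff 2 τ = 1) (hτ3 : PowerSeries.coeff 3 τ = 0)
    (hτ4 : PowerSeries.coeff 4 τ = 1) (hτ5 : PowerSeries.coeff 5 τ = 0) :
    ¬ ∃ ψ : PowerSeries F2, IsNott ψ ∧ ngComp σ ψ = ngComp ψ τ := by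
  obtain ⟨hσ0, hσ1⟩ := hσ
  obtain ⟨hτ0, hτ1⟩ := hτ
  rintro ⟨ψ, ⟨hψ0, hψ1⟩, hcomp⟩
  have h4 := congrArg (coeff 4) hcomp
  have h5 := congrArg (coeff 5) hcomp
  rw [coeff_ngComp_of_lt hψ0 (N := 6) (by norm_num), coeff_ngComp_of_lt hτ0 (N := 6) (by norm_num)]
    at h4
  rw [coeff_ngComp_of_lt hψ0 (N := 6) (by norm_num), coeff_ngComp_of_lt hτ0 (N := 6) (by norm_num)]
    at h5
  simp only [sum_range_succ, sum_range_zero, hσ0, hσ1, hσ2, hσ3, hσ4, hσ5, hτ0, hτ1, hτ2, hτ3,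
    hτ4, hτ5, hψ0, hψ1, map_zero, map_one, zero_mul, one_mul, zero_add, add_zero, pow_zero,
    pow_one] at h4 h5
  rw [(coeff_four_five_add_sq ..).1, (coeff_four_five_comp_X_add_X_sq_add_X_pow_four ..).1] at h4
  rw [(coeff_four_five_add_sq ..).2, (coeff_four_five_comp_X_add_X_sq_add_X_pow_four ..).2] at h5
  generalize coeff 2 ψ = a, coeff 3 ψ = b, coeff 4 ψ = c, coeff 5 ψ = d at h4 h5
  revert a b c d
  decide
end

section
/- The power series σ_{S,1} := t + Σ_{k≥2} (t^{2^k−2} + t^{2^k−1}) ∈ F₂[[t]] belongs to 𝒩(F₂), has compositional order 2 (σ_{S,1} ∘ σ_{S,1} = t, σ_{S,1} ≠ t) and depth 1, it is 1-sparse, and every element of 𝒩(F₂) of compositional order 2 and depth 1 is conjugate in 𝒩(F₂) to σ_{S,1}. -/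
open PowerSeries

/-- `ngIter σ n = σ^{∘n}`, the `n`-fold compositional iterate. -/
noncomputable def ngIter (σ : PowerSeries F2) : ℕ → PowerSeries F2
  | 0 => PowerSeries.X
  | n + 1 => ngComp σ (ngIter σ n)

/-- `σ` has compositional order `n`. -/
def NGOrder (σ : PowerSeries F2) (n : ℕ) : Prop :=
  ngIter σ n = PowerSeries.X ∧ ∀ m : ℕ, 0 < m → m < n → ngIter σ m ≠ PowerSeries.X

/-- `σ` has depth `m`, i.e. `ord_t (σ - t) = m + 1`. -/
def HasDepth (σ : PowerSeries F2) (m : ℕ) : Prop :=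
  (∀ i < m + 1, PowerSeries.coeff i (σ - PowerSeries.X) = 0) ∧
    PowerSeries.coeff (m + 1) (σ - PowerSeries.X) ≠ 0

/-- Conjugacy in the Nottingham group. -/
def NGConj (σ τ : PowerSeries F2) : Prop :=
  ∃ ψ : PowerSeries F2, IsNott ψ ∧ ngComp σ ψ = ngComp ψ τ

/-- `σ` is `r`-sparse: the number of nonzero coefficients among the first `N` grows
like `O((log N)^r)`. -/
def IsSparse (r : ℕ) (σ : PowerSeries F2) : Prop :=
  ∃ C : ℝ, 0 < C ∧ ∀ N : ℕ, 2 ≤ N →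
    (((Finset.range (N + 1)).filter fun k => PowerSeries.coeff k σ ≠ 0).card : ℝ) ≤
      C * Real.log N ^ r

/- The sparse series `σ_{S,1} = t + Σ_{k≥2} (t^{2^k−2} + t^{2^k−1})`. -/
open Classical in
noncomputable def sigmaS1 : PowerSeries F2 :=
  PowerSeries.mk fun n =>
    if n = 1 ∨ ∃ k : ℕ, 2 ≤ k ∧ (n = 2 ^ k - 2 ∨ n = 2 ^ k - 1) then 1 else 0

/-!
`σ_{S,1}` is algebraic. The series `w = ∑ₖ t ^ (2 ^ k - 1)` (`mersenneSeries`) satisfies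
`w = 1 + t w²` because squaring is the Frobenius, and `t σ_{S,1} = (1 + t) w + 1`; together these
give `t² σ² + (1 + t) σ + t = 0`. This relation is symmetric in `t` and `σ`, so composing it with
`σ` gives the same relation between `σ` and `σ ∘ σ`, which forces `σ ∘ σ = t`.

Conjugacy of two involutions `σ, τ` of depth `1` is shown by building `ψ` coefficient by
coefficient. For odd `m` the coefficient `ψ_m` is chosen to kill the coefficient of degree `m + 1`
of `G = σ ∘ ψ - ψ ∘ τ`. The coefficients of `G` of odd degree `n` then vanish by themselves: if `G`
has order `n`, composing `σ ∘ ψ = ψ ∘ τ + G` with the involutions gives `G ∘ τ ≡ -G` modulo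
`t ^ (n + 2)`, and since `τ = t + t² + ⋯` the degree `n + 1` term of this congruence is `n G_n = 0`.
-/

namespace NottinghamInvolution

instance : CharP F2⟦X⟧ 2 :=
  charP_of_injective_algebraMap (algebraMap F2 F2⟦X⟧).injective 2

lemma sq_eq_expand (f : F2⟦X⟧) : f ^ 2 = expand 2 two_ne_zero f := by
  have h := MvPowerSeries.map_frobenius_expand (R := F2) (σ := Unit) 2 two_ne_zero (f := f)
  rw [ZMod.frobenius_zmod, MvPowerSeries.map_id] at h
  exact h.symm

lemma coeff_sq (f : F2⟦X⟧) (n : ℕ) :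
    coeff n (f ^ 2) = if 2 ∣ n then coeff (n / 2) f else 0 := by
  rw [sq_eq_expand, coeff_expand]

lemma coeff_pow_eq_zero_of_lt {τ : F2⟦X⟧} (hτ : constantCoeff τ = 0) {k d : ℕ} (h : k < d) :
    coeff k (τ ^ d) = 0 :=
  X_pow_dvd_iff.mp (pow_dvd_pow_of_dvd (X_dvd_iff.mpr hτ) d) k h

lemma ngComp_eq_subst (σ : F2⟦X⟧) {τ : F2⟦X⟧} (hτ : constantCoeff τ = 0) :
    ngComp σ τ = σ.subst τ := by
  ext k
  rw [coeff_subst' (HasSubst.of_constantCoeff_zero' hτ),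
    finsum_eq_sum_of_support_subset (s := Finset.range (k + 1))]
  · simp [ngComp]
  · intro d hd
    by_contra h
    simp only [Finset.coe_range, Set.mem_Iio, not_lt] at h
    exact hd (by simp [coeff_pow_eq_zero_of_lt hτ (Nat.lt_of_succ_le h)])

section Composition

variable {τ : F2⟦X⟧}

lemma zero_ngComp : ngComp 0 τ = 0 := by
  ext k
  simp [ngComp]

lemma ngComp_add (σ σ' : F2⟦X⟧) : ngComp (σ + σ') τ = ngComp σ τ + ngComp σ' τ := by
  ext k
  simp [ngComp, add_mul, Finset.sum_add_distrib]

lemma constantCoeff_ngComp (σ : F2⟦X⟧) : constantCoeff (ngComp σ τ) = constantCoeff σ := by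
  rw [← coeff_zero_eq_constantCoeff_apply, ← coeff_zero_eq_constantCoeff_apply]
  simp [ngComp]

lemma coeff_one_ngComp (σ : F2⟦X⟧) : coeff 1 (ngComp σ τ) = coeff 1 σ * coeff 1 τ := by
  simp [ngComp, Finset.sum_range_succ]

lemma coeff_two_ngComp (σ : F2⟦X⟧) :
    coeff 2 (ngComp σ τ) = coeff 1 σ * coeff 2 τ + coeff 2 σ * coeff 1 τ := by
  simp [ngComp, Finset.sum_range_succ, coeff_sq]

variable (hτ : constantCoeff τ = 0)
include hτ

lemma ngComp_mul (σ σ' : F2⟦X⟧) : ngComp (σ * σ') τ = ngComp σ τ * ngComp σ' τ := by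
  simp only [ngComp_eq_subst _ hτ, subst_mul (HasSubst.of_constantCoeff_zero' hτ)]

lemma ngComp_pow (σ : F2⟦X⟧) (n : ℕ) : ngComp (σ ^ n) τ = ngComp σ τ ^ n := by
  simp only [ngComp_eq_subst _ hτ, subst_pow (HasSubst.of_constantCoeff_zero' hτ)]

lemma X_ngComp : ngComp X τ = τ := by
  rw [ngComp_eq_subst _ hτ, subst_X (HasSubst.of_constantCoeff_zero' hτ)]

lemma C_ngComp (c : F2) : ngComp (C c) τ = C c := by
  rw [ngComp_eq_subst _ hτ, subst_C]
  rfl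

end Composition

lemma ngComp_assoc (σ : F2⟦X⟧) {τ ρ : F2⟦X⟧} (hτ : constantCoeff τ = 0)
    (hρ : constantCoeff ρ = 0) : ngComp (ngComp σ τ) ρ = ngComp σ (ngComp τ ρ) := by
  have hτρ : constantCoeff (ngComp τ ρ) = 0 := by rw [constantCoeff_ngComp, hτ]
  rw [ngComp_eq_subst _ hρ, ngComp_eq_subst _ hτ, ngComp_eq_subst _ hτρ, ngComp_eq_subst _ hρ,
    subst_comp_subst_apply (HasSubst.of_constantCoeff_zero' hτ)
      (HasSubst.of_constantCoeff_zero' hρ)]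

lemma ngComp_X (σ : F2⟦X⟧) : ngComp σ X = σ := by
  rw [ngComp_eq_subst _ constantCoeff_X, X_subst]

lemma constantCoeff_eq_zero_of_isNott {σ : F2⟦X⟧} (hσ : IsNott σ) : constantCoeff σ = 0 := by
  simpa using hσ.1

lemma coeff_two_eq_one_of_hasDepth_one {σ : F2⟦X⟧} (h : HasDepth σ 1) : coeff 2 σ = 1 := by
  have h2 := h.2
  rw [map_sub, coeff_X, if_neg (by decide), sub_zero] at h2
  exact Fin.eq_one_of_ne_zero _ h2

lemma ngComp_self_eq_X_of_quadratic {σ : F2⟦X⟧} (hσ : constantCoeff σ = 0)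
    (h : X ^ 2 * σ ^ 2 + X * σ + σ + X = 0) : ngComp σ σ = X := by
  set ρ := ngComp σ σ
  have hρ : σ ^ 2 * ρ ^ 2 + σ * ρ + ρ + σ = 0 := by
    simpa [ngComp_add, ngComp_mul hσ, ngComp_pow hσ, X_ngComp hσ, zero_ngComp] using
      congrArg (ngComp · σ) h
  have hfactor : (ρ - X) * (σ ^ 2 * (ρ + X) + σ + 1) = 0 := by linear_combination hρ - h
  have hunit : σ ^ 2 * (ρ + X) + σ + 1 ≠ 0 := fun h0 => by
    simpa [ρ, hσ, constantCoeff_ngComp] using congrArg constantCoeff h0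
  exact sub_eq_zero.mp ((mul_eq_zero.mp hfactor).resolve_right hunit)

lemma isPowerOfTwo_add_two_iff (m : ℕ) :
    (m + 2).isPowerOfTwo ↔ 2 ∣ m ∧ (m / 2 + 1).isPowerOfTwo := by
  constructor
  · rintro ⟨_ | k, hk⟩
    · simp at hk
    · rw [pow_succ] at hk
      exact ⟨⟨2 ^ k - 1, by omega⟩, k, by omega⟩
  · rintro ⟨⟨a, rfl⟩, k, hk⟩
    exact ⟨k + 1, by rw [pow_succ]; omega⟩

lemma not_isPowerOfTwo_add_one_and_add_two {n : ℕ} (hn : 0 < n) :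
    ¬ ((n + 1).isPowerOfTwo ∧ (n + 2).isPowerOfTwo) := by
  rintro ⟨⟨_ | a, ha⟩, ⟨_ | b, hb⟩⟩ <;> simp only [pow_zero, pow_succ] at ha hb <;> omega

lemma sigmaS1_support_iff (n : ℕ) :
    (n = 1 ∨ ∃ k : ℕ, 2 ≤ k ∧ (n = 2 ^ k - 2 ∨ n = 2 ^ k - 1)) ↔
      0 < n ∧ ((n + 1).isPowerOfTwo ∨ (n + 2).isPowerOfTwo) := by
  constructor
  · rintro (rfl | ⟨k, hk, h | h⟩)
    · exact ⟨one_pos, Or.inl ⟨1, rfl⟩⟩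
    all_goals have : 4 ≤ 2 ^ k := le_trans (by norm_num) (Nat.pow_le_pow_right two_pos hk)
    · exact ⟨by omega, Or.inr ⟨k, by omega⟩⟩
    · exact ⟨by omega, Or.inl ⟨k, by omega⟩⟩
  · rintro ⟨hn, ⟨k, hk⟩ | ⟨k, hk⟩⟩ <;> rcases Nat.lt_or_ge k 2 with hk2 | hk2
    · interval_cases k <;> simp_all
    · exact Or.inr ⟨k, hk2, Or.inr (by omega)⟩
    · interval_cases k <;> simp_all
    · exact Or.inr ⟨k, hk2, Or.inl (by omega)⟩

lemma coeff_sigmaS1 (n : ℕ) :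
    coeff n sigmaS1 = if 0 < n ∧ ((n + 1).isPowerOfTwo ∨ (n + 2).isPowerOfTwo) then 1 else 0 := by
  simp only [sigmaS1, coeff_mk, sigmaS1_support_iff]

lemma constantCoeff_sigmaS1 : constantCoeff sigmaS1 = 0 := by
  rw [← coeff_zero_eq_constantCoeff_apply, coeff_sigmaS1]
  decide

lemma coeff_one_sigmaS1 : coeff 1 sigmaS1 = 1 := by
  rw [coeff_sigmaS1]
  decide

lemma coeff_two_sigmaS1 : coeff 2 sigmaS1 = 1 := by
  rw [coeff_sigmaS1]
  decide

noncomputable def mersenneSeries : F2⟦X⟧ :=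
  mk fun n => if (n + 1).isPowerOfTwo then 1 else 0

lemma mersenneSeries_eq : mersenneSeries = 1 + X * mersenneSeries ^ 2 := by
  ext n
  rcases n with _ | n
  · simp [mersenneSeries, Nat.isPowerOfTwo_one]
  · simp only [map_add, coeff_succ_X_mul, coeff_sq, coeff_one, mersenneSeries, coeff_mk,
      isPowerOfTwo_add_two_iff]
    by_cases h : 2 ∣ n <;> simp [h]

lemma X_mul_sigmaS1 : X * sigmaS1 = (1 + X) * mersenneSeries + 1 := by
  ext n
  rcases n with _ | n
  · simp only [coeff_zero_X_mul, add_mul, one_mul, map_add, mersenneSeries, coeff_mk,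
      coeff_zero_eq_constantCoeff, map_one]
    decide
  · simp only [coeff_succ_X_mul, coeff_sigmaS1, add_mul, one_mul, map_add, coeff_one,
      n.succ_ne_zero, if_false, add_zero, mersenneSeries, coeff_mk]
    rcases Nat.eq_zero_or_pos n with rfl | hn
    · decide
    · have := not_isPowerOfTwo_add_one_and_add_two hn
      by_cases h1 : (n + 1).isPowerOfTwo <;> by_cases h2 : (n + 2).isPowerOfTwo <;> simp_all

lemma sigmaS1_quadratic : X ^ 2 * sigmaS1 ^ 2 + X * sigmaS1 + sigmaS1 + X = 0 := by
  -- `reduce_mod_char!` reads the characteristic off a local instance.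
  have := (inferInstance : CharP F2⟦X⟧ 2)
  refine (mul_eq_zero.mp ?_).resolve_left (X_ne_zero (R := F2))
  linear_combination (norm := ring_nf)
    (X * (X * sigmaS1 + (1 + X) * mersenneSeries + 1) + 1 + X) * X_mul_sigmaS1 +
      (1 + X) ^ 2 * mersenneSeries_eq
  reduce_mod_char!

lemma X_pow_dvd_ngComp_sub_ngComp (f : F2⟦X⟧) {A B : F2⟦X⟧} {n : ℕ} (h : X ^ n ∣ A - B) :
    X ^ n ∣ ngComp f A - ngComp f B := by
  refine X_pow_dvd_iff.mpr fun k hk => ?_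
  simp only [map_sub, ngComp, coeff_mk, ← Finset.sum_sub_distrib, ← mul_sub]
  refine Finset.sum_eq_zero fun m _ => ?_
  rw [← map_sub, X_pow_dvd_iff.mp (h.trans (sub_dvd_pow_sub_pow A B m)) k hk, mul_zero]

/-- Writing `σ = σ₀ + X + X² ρ`, the difference is `A² (ρ(A+B) - ρ(A)) + B² ρ(A+B)`: the cross
term `2 A B ρ(A+B)` vanishes in characteristic `2`. -/
lemma X_pow_add_two_dvd_ngComp_add_sub {σ A B : F2⟦X⟧} {n : ℕ} (hσ : coeff 1 σ = 1)
    (hA : constantCoeff A = 0) (hn : 2 ≤ n) (hB : X ^ n ∣ B) :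
    X ^ (n + 2) ∣ ngComp σ (A + B) - ngComp σ A - B := by
  set c := constantCoeff σ
  obtain ⟨ρ, hρ⟩ : X ^ 2 ∣ σ - C c - X := X_pow_dvd_iff.mpr fun m hm => by
    interval_cases m <;> simp [c, hσ, coeff_X]
  have hexpand (U : F2⟦X⟧) (hU : constantCoeff U = 0) :
      ngComp σ U = C c + U + U ^ 2 * ngComp ρ U := by
    rw [show σ = C c + X + X ^ 2 * ρ by linear_combination hρ, ngComp_add, ngComp_add,
      ngComp_mul hU, ngComp_pow hU, C_ngComp hU, X_ngComp hU]
  have hB0 : constantCoeff B = 0 := X_dvd_iff.mp ((dvd_pow_self X (by omega)).trans hB)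
  have hAB : constantCoeff (A + B) = 0 := by rw [map_add, hA, hB0, add_zero]
  have hdiff : ngComp σ (A + B) - ngComp σ A - B =
      A ^ 2 * (ngComp ρ (A + B) - ngComp ρ A) + B ^ 2 * ngComp ρ (A + B) := by
    rw [hexpand _ hAB, hexpand _ hA]
    linear_combination (A * B * ngComp ρ (A + B)) * CharTwo.two_eq_zero (R := F2⟦X⟧)
  rw [hdiff, pow_add, mul_comm]
  refine dvd_add (mul_dvd_mul (pow_dvd_pow_of_dvd (X_dvd_iff.mpr hA) 2)
    (X_pow_dvd_ngComp_sub_ngComp ρ (by rwa [add_sub_cancel_left]))) (dvd_mul_of_dvd_left ?_ _)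
  rw [← pow_add]
  exact (pow_dvd_pow (X : F2⟦X⟧) (by omega : 2 + n ≤ n * 2)).trans
    (pow_mul (X : F2⟦X⟧) n 2 ▸ pow_dvd_pow_of_dvd hB 2)

lemma coeff_succ_ngComp_X_pow_mul {τ : F2⟦X⟧} (hτ0 : constantCoeff τ = 0) (hτ1 : coeff 1 τ = 1)
    (H : F2⟦X⟧) (n : ℕ) :
    coeff (n + 1) (ngComp (X ^ n * H) τ) = n * coeff 2 τ * constantCoeff H + coeff 1 H := by
  obtain ⟨u, rfl⟩ := X_dvd_iff.mpr hτ0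
  have hu0 : constantCoeff u = 1 := by simpa using hτ1
  rw [ngComp_mul hτ0, ngComp_pow hτ0, X_ngComp hτ0, mul_pow, mul_assoc, add_comm,
    coeff_X_pow_mul, coeff_one_mul, coeff_one_pow, coeff_one_ngComp, constantCoeff_ngComp,
    map_pow, hu0, hτ1, one_pow, mul_one, mul_one, ← coeff_succ_X_mul 1 u, one_pow, mul_one]

section Recursion

variable {A : Type*} [CommSemiring A]

noncomputable def truncRec (F : ℕ → Polynomial A → A) : ℕ → Polynomial A
  | 0 => 0
  | n + 1 => truncRec F n + Polynomial.monomial n (F n (truncRec F n))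

lemma trunc_mk_truncRec (F : ℕ → Polynomial A → A) (n : ℕ) :
    trunc n (mk fun k => F k (truncRec F k)) = truncRec F n := by
  induction n with
  | zero => rfl
  | succ n ih => rw [trunc_succ, ih, coeff_mk, truncRec]

theorem exists_coeff_eq_apply_trunc (F : ℕ → Polynomial A → A) :
    ∃ ψ : A⟦X⟧, ∀ n, coeff n ψ = F n (trunc n ψ) :=
  ⟨mk fun k => F k (truncRec F k), fun n => by rw [coeff_mk, trunc_mk_truncRec]⟩

end Recursion

section Conjugacy

variable {σ τ ψ : F2⟦X⟧}

lemma coeff_ngComp_sub_ngComp_eq_zero_of_odd (hσ : IsNott σ) (hσσ : ngComp σ σ = X) (hτ : IsNott τ)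
    (hττ : ngComp τ τ = X) (hτ2 : coeff 2 τ = 1) (hψ : constantCoeff ψ = 0) {n : ℕ} (hn : 3 ≤ n)
    (hodd : Odd n) (hG : X ^ n ∣ ngComp σ ψ - ngComp ψ τ) :
    coeff n (ngComp σ ψ - ngComp ψ τ) = 0 := by
  set G := ngComp σ ψ - ngComp ψ τ with hGdef
  have hσ0 := constantCoeff_eq_zero_of_isNott hσ
  have hτ0 := constantCoeff_eq_zero_of_isNott hτ
  have hψτ : constantCoeff (ngComp ψ τ) = 0 := by rw [constantCoeff_ngComp, hψ]
  have hσψ : ngComp ψ τ + G = ngComp σ ψ := by rw [hGdef, add_sub_cancel]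
  have hGτ : X ^ (n + 2) ∣ ngComp G τ + G := by
    have h := X_pow_add_two_dvd_ngComp_add_sub hσ.2 hψτ (by omega) hG
    rwa [hσψ, ← ngComp_assoc σ hσ0 hψ, hσσ, X_ngComp hψ, ← ngComp_assoc σ hψ hτ0, ← hσψ,
      ngComp_add, ngComp_assoc ψ hτ0 hτ0, hττ, ngComp_X, show ∀ a b c : F2⟦X⟧,
        a - (a + b) - c = -(b + c) by intros; ring, dvd_neg] at h
  obtain ⟨H, hH⟩ := hG
  have h := X_pow_dvd_iff.mp hGτ (n + 1) (by omega)
  rw [map_add, hH, coeff_succ_ngComp_X_pow_mul hτ0 hτ.2, hτ2, ZMod.natCast_eq_one_iff_odd.mpr hodd,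
    coeff_X_pow_mul', if_pos (by omega), Nat.add_sub_cancel_left] at h
  rw [hH, coeff_X_pow_mul', if_pos le_rfl, Nat.sub_self, coeff_zero_eq_constantCoeff_apply]
  linear_combination h - coeff 1 H * CharTwo.two_eq_zero (R := F2)

lemma coeff_succ_ngComp_sub_ngComp_eq_trunc (hσ1 : coeff 1 σ = 1) (hτ0 : constantCoeff τ = 0)
    (hτ1 : coeff 1 τ = 1) (hτ2 : coeff 2 τ = 1) (hψ : constantCoeff ψ = 0) {m : ℕ} (hm : 2 ≤ m)
    (hodd : Odd m) :
    coeff (m + 1) (ngComp σ ψ - ngComp ψ τ) =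
      coeff (m + 1) (ngComp σ (trunc m ψ) - ngComp (trunc m ψ : F2⟦X⟧) τ) - coeff m ψ := by
  set T : F2⟦X⟧ := ↑(trunc m ψ)
  set H : F2⟦X⟧ := mk fun i => coeff (i + m) ψ
  have hsplit : ψ = T + X ^ m * H := by rw [add_comm]; exact eq_X_pow_mul_shift_add_trunc m ψ
  have hT : constantCoeff T = 0 := by
    rw [← coeff_zero_eq_constantCoeff_apply, Polynomial.coeff_coe, coeff_trunc, if_pos (by omega),
      coeff_zero_eq_constantCoeff_apply, hψ]
  have hleft := X_pow_dvd_iff.mp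
    (X_pow_add_two_dvd_ngComp_add_sub hσ1 hT hm (dvd_mul_right (X ^ m) H)) (m + 1) (by omega)
  rw [← hsplit, map_sub, map_sub, sub_eq_zero, coeff_X_pow_mul', if_pos (by omega),
    Nat.add_sub_cancel_left] at hleft
  rw [map_sub, sub_eq_iff_eq_add.mp hleft]
  conv_lhs => rw [hsplit, ngComp_add, map_add, coeff_succ_ngComp_X_pow_mul hτ0 hτ1, hτ2,
    ZMod.natCast_eq_one_iff_odd.mpr hodd]
  simp only [H, coeff_mk, map_sub, ← coeff_zero_eq_constantCoeff_apply, zero_add, add_comm 1 m]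
  ring

theorem ngConj_of_involution (hσ : IsNott σ) (hσσ : ngComp σ σ = X) (hσ2 : coeff 2 σ = 1)
    (hτ : IsNott τ) (hττ : ngComp τ τ = X) (hτ2 : coeff 2 τ = 1) : NGConj σ τ := by
  obtain ⟨ψ, hψ⟩ := exists_coeff_eq_apply_trunc fun n T =>
    if n = 0 then 0 else if n = 1 then 1 else coeff (n + 1) (ngComp σ T - ngComp (T : F2⟦X⟧) τ)
  have hψ0 : constantCoeff ψ = 0 := by simpa using hψ 0
  have hψ1 : coeff 1 ψ = 1 := by simpa using hψ 1
  have hτ0 := constantCoeff_eq_zero_of_isNott hτ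
  refine ⟨ψ, ⟨by simpa using hψ0, hψ1⟩, sub_eq_zero.mp (ext fun n => ?_)⟩
  induction n using Nat.strong_induction_on with
  | _ n ih =>
  have hG : X ^ n ∣ ngComp σ ψ - ngComp ψ τ := X_pow_dvd_iff.mpr fun m hm => by
    simpa using ih m hm
  rw [map_zero]
  obtain _ | _ | _ | n := n
  · simp [constantCoeff_ngComp, hψ0, constantCoeff_eq_zero_of_isNott hσ]
  · simp [coeff_one_ngComp, hσ.2, hψ1, hτ.2]
  · simp only [zero_add, Nat.reduceAdd, map_sub, coeff_two_ngComp, hσ.2, hψ1, hτ.2, hσ2, hτ2]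
    ring
  rcases Nat.even_or_odd n with hn | hn
  · exact coeff_ngComp_sub_ngComp_eq_zero_of_odd hσ hσσ hτ hττ hτ2 hψ0 (by omega)
      (by simpa [parity_simps] using hn) hG
  · rw [coeff_succ_ngComp_sub_ngComp_eq_trunc hσ.2 hτ0 hτ.2 hτ2 hψ0 (by omega)
      (by simpa [parity_simps] using hn), hψ, if_neg (by omega), if_neg (by omega), sub_self]

end Conjugacy

lemma card_support_sigmaS1_le (N : ℕ) :
    ((Finset.range (N + 1)).filter fun k => coeff k sigmaS1 ≠ 0).card ≤ 2 * (Nat.log 2 N + 2) := by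
  classical
  calc _ ≤ ((Finset.range (Nat.log 2 N + 2)).biUnion fun j => {2 ^ j - 2, 2 ^ j - 1}).card := by
        refine Finset.card_le_card fun k hk => ?_
        simp only [Finset.mem_filter, Finset.mem_range, coeff_sigmaS1, ne_eq, ite_eq_right_iff,
          one_ne_zero, imp_false, not_not] at hk
        obtain ⟨hkN, hk0, ⟨j, hj⟩ | ⟨j, hj⟩⟩ := hk
        all_goals
          have hlog : N < 2 ^ (Nat.log 2 N + 1) := Nat.lt_pow_succ_log_self one_lt_two N
          have hj' : j < Nat.log 2 N + 2 := (Nat.pow_lt_pow_iff_right (by norm_num)).mp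
            (show 2 ^ j < 2 ^ (Nat.log 2 N + 2) by rw [pow_succ]; omega)
          simp only [Finset.mem_biUnion, Finset.mem_range, Finset.mem_insert,
            Finset.mem_singleton]
          exact ⟨j, hj', by omega⟩
    _ ≤ (Finset.range (Nat.log 2 N + 2)).card * 2 :=
        Finset.card_biUnion_le_card_mul _ _ _ fun _ _ => Finset.card_le_two
    _ = 2 * (Nat.log 2 N + 2) := by rw [Finset.card_range, mul_comm]

lemma isSparse_one_sigmaS1 : IsSparse 1 sigmaS1 := by
  refine ⟨10, by norm_num, fun N hN => ?_⟩
  have hlog2 : 2 / 3 < Real.log 2 := by linarith [Real.log_two_gt_d9]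
  have hlogN : Real.log 2 ≤ Real.log N := Real.log_le_log (by norm_num) (by exact_mod_cast hN)
  have hL : (Nat.log 2 N : ℝ) ≤ 2 * Real.log N := by
    refine (Real.natLog_le_logb N 2).trans ?_
    rw [Real.logb, Nat.cast_ofNat, div_le_iff₀ (by linarith)]
    nlinarith
  calc _ ≤ ((2 * (Nat.log 2 N + 2) : ℕ) : ℝ) := by exact_mod_cast card_support_sigmaS1_le N
    _ ≤ 10 * Real.log N ^ 1 := by push_cast; linarith

end NottinghamInvolution

open NottinghamInvolution in
theorem statement13 :
    IsNott sigmaS1 ∧ ngComp sigmaS1 sigmaS1 = PowerSeries.X ∧ sigmaS1 ≠ PowerSeries.X ∧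
    HasDepth sigmaS1 1 ∧ IsSparse 1 sigmaS1 ∧
    ∀ σ : PowerSeries F2, IsNott σ → ngComp σ σ = PowerSeries.X → σ ≠ PowerSeries.X →
      HasDepth σ 1 → NGConj σ sigmaS1 := by
  have hNott : IsNott sigmaS1 := ⟨by simpa using constantCoeff_sigmaS1, coeff_one_sigmaS1⟩
  have hinv : ngComp sigmaS1 sigmaS1 = X :=
    ngComp_self_eq_X_of_quadratic constantCoeff_sigmaS1 sigmaS1_quadratic
  refine ⟨hNott, hinv, fun h => ?_, ⟨fun i hi => ?_, ?_⟩, isSparse_one_sigmaS1,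
    fun σ hσ hσσ _ hdepth =>
      ngConj_of_involution hσ hσσ (coeff_two_eq_one_of_hasDepth_one hdepth) hNott hinv
        coeff_two_sigmaS1⟩
  · simpa [h, coeff_X] using coeff_two_sigmaS1
  · interval_cases i <;> simp [coeff_X, constantCoeff_sigmaS1, coeff_one_sigmaS1]
  · simp [coeff_X, coeff_two_sigmaS1]
end

section
/- Let σ = Σ_{k≥0} a_k t^k ∈ F₂[[t]] be a power series. The following conditions are equivalent: (1) there exist a sparse power series ρ ∈ F₂[[t]] and nonzero polynomials p, q ∈ F₂[t] such that q·σ = p·ρ in F₂[[t]] (i.e., σ is the product of a sparse power series and a rational function); (2) there exists an integer m ≥ 1 such that (t^m + 1)·σ is sparse; (3) there exists an integer m ≥ 1 such that the power series Σ_{k≥0} (a_k + a_{k+m}) t^k is sparse; (4) there exists an integer m ≥ 1 such that for every integer q ≥ 0 the power series Σ_{k≥0} (a_k + a_{k+2^q·m}) t^k is sparse. -/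
open PowerSeries

/-- `σ` is sparse. -/
def Sparse (σ : PowerSeries F2) : Prop := ∃ r : ℕ, IsSparse r σ

/-!
Sparsity survives addition, multiplication by a polynomial and shifting coefficients
by a bounded amount: a shift by `d` only costs a factor `(d + 1) ^ r`, since
`log (N + d) ≤ (d + 1) log N`. With this, (2) ⇔ (3) is the identity
`(X^m + 1) σ = X^m (σ + S^m σ) + (σ mod X^m)`, where `S^m` drops the first `m` coefficients,
and (3) ⇒ (4) follows by induction from `σ + S^{2D} σ = τ + S^D τ` for `τ = σ + S^D σ`,
valid in characteristic `2`. For (1) ⇒ (2), write `q = X^s q₁` with `X ∤ q₁`; then `X` is a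
unit in the finite ring `F₂[X]/(q₁)`, so `q₁ ∣ X^m + 1` for `m` its order, and
`(X^m + 1) σ = (X^m + 1)/q₁ · S^s (p ρ)` is sparse.
-/

open Finset

noncomputable def nonzeroCoeffs (σ : F2⟦X⟧) (N : ℕ) : Finset ℕ :=
  (range (N + 1)).filter fun k => coeff k σ ≠ 0

@[simp]
lemma mem_nonzeroCoeffs {σ : F2⟦X⟧} {N k : ℕ} :
    k ∈ nonzeroCoeffs σ N ↔ k ≤ N ∧ coeff k σ ≠ 0 := by
  simp [nonzeroCoeffs]

lemma nonzeroCoeffs_add_subset (σ τ : F2⟦X⟧) (N : ℕ) :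
    nonzeroCoeffs (σ + τ) N ⊆ nonzeroCoeffs σ N ∪ nonzeroCoeffs τ N := by
  intro k
  simp only [mem_nonzeroCoeffs, mem_union, map_add]
  grind

lemma isSparse_iff {r : ℕ} {σ : F2⟦X⟧} :
    IsSparse r σ ↔ ∃ C : ℝ, 0 < C ∧ ∀ N : ℕ, 2 ≤ N →
      (#(nonzeroCoeffs σ N) : ℝ) ≤ C * Real.log N ^ r :=
  Iff.rfl

lemma Nat.add_le_pow_succ {N : ℕ} (hN : 2 ≤ N) (d : ℕ) : N + d ≤ N ^ (d + 1) := by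
  induction d with
  | zero => simp
  | succ d ih =>
    have := Nat.one_le_pow (d + 1) N (by omega)
    rw [pow_succ]
    nlinarith

lemma Real.log_add_le_succ_mul_log {N : ℕ} (hN : 2 ≤ N) (d : ℕ) :
    Real.log (N + d : ℕ) ≤ (d + 1) * Real.log N := by
  calc Real.log (N + d : ℕ) ≤ Real.log (N ^ (d + 1) : ℕ) :=
        Real.log_le_log (by norm_cast; omega) (by exact_mod_cast Nat.add_le_pow_succ hN d)
    _ = (d + 1) * Real.log N := by rw [Nat.cast_pow, Real.log_pow]; push_cast; ring

lemma IsSparse.mono {r r' : ℕ} {σ : F2⟦X⟧} (h : IsSparse r σ) (hr : r ≤ r') :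
    IsSparse r' σ := by
  obtain ⟨C, hC, hb⟩ := h
  obtain ⟨e, rfl⟩ := Nat.exists_eq_add_of_le hr
  have hlog2 : 0 < Real.log 2 := Real.log_pos one_lt_two
  refine ⟨C / Real.log 2 ^ e, by positivity, fun N hN => (hb N hN).trans ?_⟩
  have hlogN : Real.log 2 ≤ Real.log N := Real.log_le_log two_pos (by exact_mod_cast hN)
  rw [div_mul_eq_mul_div, le_div_iff₀ (by positivity), pow_add, mul_assoc]
  gcongr

lemma IsSparse.add {r : ℕ} {σ τ : F2⟦X⟧} (hσ : IsSparse r σ) (hτ : IsSparse r τ) :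
    IsSparse r (σ + τ) := by
  obtain ⟨C₁, hC₁, hb₁⟩ := isSparse_iff.mp hσ
  obtain ⟨C₂, hC₂, hb₂⟩ := isSparse_iff.mp hτ
  refine isSparse_iff.mpr ⟨C₁ + C₂, by positivity, fun N hN => ?_⟩
  calc (#(nonzeroCoeffs (σ + τ) N) : ℝ)
      ≤ #(nonzeroCoeffs σ N ∪ nonzeroCoeffs τ N) := by
        exact_mod_cast card_le_card (nonzeroCoeffs_add_subset σ τ N)
    _ ≤ #(nonzeroCoeffs σ N) + #(nonzeroCoeffs τ N) := by exact_mod_cast card_union_le _ _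
    _ ≤ C₁ * Real.log N ^ r + C₂ * Real.log N ^ r := add_le_add (hb₁ N hN) (hb₂ N hN)
    _ = (C₁ + C₂) * Real.log N ^ r := by ring

lemma Sparse.add {σ τ : F2⟦X⟧} (hσ : Sparse σ) (hτ : Sparse τ) : Sparse (σ + τ) := by
  obtain ⟨r₁, h₁⟩ := hσ
  obtain ⟨r₂, h₂⟩ := hτ
  exact ⟨max r₁ r₂, (h₁.mono (le_max_left _ _)).add (h₂.mono (le_max_right _ _))⟩

lemma Sparse.of_injOn {σ τ : F2⟦X⟧} (hσ : Sparse σ) (d : ℕ) (f : ℕ → ℕ)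
    (hf : ∀ k, coeff k τ ≠ 0 → coeff (f k) σ ≠ 0 ∧ f k ≤ k + d)
    (hinj : Set.InjOn f {k | coeff k τ ≠ 0}) : Sparse τ := by
  obtain ⟨r, hσ⟩ := hσ
  obtain ⟨C, hC, hb⟩ := isSparse_iff.mp hσ
  refine ⟨r, isSparse_iff.mpr ⟨C * (d + 1) ^ r, by positivity, fun N hN => ?_⟩⟩
  have hcard : #(nonzeroCoeffs τ N) ≤ #(nonzeroCoeffs σ (N + d)) := by
    refine card_le_card_of_injOn f (fun k hk => ?_)
      (hinj.mono fun k hk => (mem_nonzeroCoeffs.mp hk).2)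
    obtain ⟨hkN, hk⟩ := mem_nonzeroCoeffs.mp hk
    exact mem_nonzeroCoeffs.mpr ⟨by grind, (hf k hk).1⟩
  have hlog := Real.log_add_le_succ_mul_log hN d
  calc (#(nonzeroCoeffs τ N) : ℝ) ≤ #(nonzeroCoeffs σ (N + d)) := by exact_mod_cast hcard
    _ ≤ C * Real.log (N + d : ℕ) ^ r := hb (N + d) (by omega)
    _ ≤ C * ((d + 1) * Real.log N) ^ r := by gcongr
    _ = C * (d + 1) ^ r * Real.log N ^ r := by rw [mul_pow]; ring

lemma Sparse.mk_coeff_add {σ : F2⟦X⟧} (hσ : Sparse σ) (d : ℕ) :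
    Sparse (mk fun k => coeff (k + d) σ) :=
  hσ.of_injOn d (· + d) (fun k hk => ⟨by simpa using hk, le_rfl⟩)
    fun _ _ _ _ h => Nat.add_right_cancel h

lemma Sparse.C_mul {ρ : F2⟦X⟧} (hρ : Sparse ρ) (a : F2) : Sparse (C a * ρ) :=
  hρ.of_injOn (τ := C a * ρ) 0 id
    (fun k hk => ⟨right_ne_zero_of_mul (by rwa [coeff_C_mul] at hk), le_rfl⟩) (Set.injOn_id _)

lemma Sparse.X_pow_mul {ρ : F2⟦X⟧} (hρ : Sparse ρ) (n : ℕ) : Sparse (X ^ n * ρ) := by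
  have hsupp : ∀ k, coeff k (X ^ n * ρ) ≠ 0 → n ≤ k ∧ coeff (k - n) ρ ≠ 0 := by
    intro k hk
    rw [coeff_X_pow_mul'] at hk
    split_ifs at hk with hnk
    exacts [⟨hnk, hk⟩, absurd rfl hk]
  exact hρ.of_injOn 0 (· - n) (fun k hk => ⟨(hsupp k hk).2, by omega⟩)
    fun a ha b hb h => (tsub_left_inj (hsupp a ha).1 (hsupp b hb).1).mp h

lemma Sparse.polynomial_mul {ρ : F2⟦X⟧} (hρ : Sparse ρ) (p : Polynomial F2) :
    Sparse ((p : F2⟦X⟧) * ρ) := by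
  induction p using Polynomial.induction_on' with
  | add f g hf hg => rw [Polynomial.coe_add, add_mul]; exact hf.add hg
  | monomial n a =>
    rw [Polynomial.coe_monomial, monomial_eq_C_mul_X_pow, mul_assoc]
    exact (hρ.X_pow_mul n).C_mul a

lemma sparse_coe_polynomial (p : Polynomial F2) : Sparse (p : F2⟦X⟧) := by
  refine ⟨0, isSparse_iff.mpr ⟨#p.support + 1, by positivity, fun N _ => ?_⟩⟩
  have hsub : nonzeroCoeffs (p : F2⟦X⟧) N ⊆ p.support := fun k hk => by
    simpa using (mem_nonzeroCoeffs.mp hk).2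
  rw [pow_zero, mul_one]
  exact_mod_cast (card_le_card hsub).trans (Nat.le_succ _)

lemma Polynomial.exists_dvd_X_pow_sub_one {K : Type*} [Field K] [Finite K]
    {q : Polynomial K} (hq : q ≠ 0) (hX : ¬ Polynomial.X ∣ q) :
    ∃ m, 1 ≤ m ∧ q ∣ Polynomial.X ^ m - 1 := by
  have : Module.Finite K (AdjoinRoot q) := (AdjoinRoot.powerBasis hq).finite
  have : Finite (AdjoinRoot q) := Module.finite_of_finite K
  obtain ⟨a, b, hab⟩ := (irreducible_X.coprime_iff_not_dvd.mpr hX).symm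
  have hunit : IsUnit (AdjoinRoot.root q) := by
    refine IsUnit.of_mul_eq_one_right (AdjoinRoot.mk q b) ?_
    simpa using congrArg (AdjoinRoot.mk q) hab
  refine ⟨orderOf (AdjoinRoot.root q), hunit.isOfFinOrder.orderOf_pos, ?_⟩
  rw [← AdjoinRoot.mk_eq_mk, map_pow, AdjoinRoot.mk_X, map_one, pow_orderOf_eq_one]

lemma exists_sparse_X_pow_add_one_mul {σ ρ : F2⟦X⟧} {p q : Polynomial F2} (hρ : Sparse ρ)
    (hq : q ≠ 0) (h : (q : F2⟦X⟧) * σ = p * ρ) :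
    ∃ m, 1 ≤ m ∧ Sparse ((X ^ m + 1) * σ) := by
  obtain ⟨q₁, hq₁, hX⟩ := Polynomial.exists_eq_pow_rootMultiplicity_mul_and_not_dvd q hq 0
  rw [map_zero, sub_zero] at hq₁ hX
  set s := q.rootMultiplicity 0
  have hq₁σ : (q₁ : F2⟦X⟧) * σ = mk fun k => coeff (k + s) ((p : F2⟦X⟧) * ρ) := by
    ext k
    rw [coeff_mk, ← h, hq₁, Polynomial.coe_mul, Polynomial.coe_pow, Polynomial.coe_X, mul_assoc,
      coeff_X_pow_mul]
  obtain ⟨m, hm, g, hg⟩ :=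
    Polynomial.exists_dvd_X_pow_sub_one (right_ne_zero_of_mul (hq₁ ▸ hq)) hX
  refine ⟨m, hm, ?_⟩
  have hmul : (X ^ m + 1 : F2⟦X⟧) * σ = g * (q₁ * σ) := by
    rw [← mul_assoc, ← Polynomial.coe_mul, mul_comm g, ← hg, CharTwo.sub_eq_add]
    simp
  rw [hmul, hq₁σ]
  exact ((hρ.polynomial_mul p).mk_coeff_add s).polynomial_mul g

lemma sparse_X_pow_add_one_mul_iff (σ : F2⟦X⟧) (m : ℕ) :
    Sparse ((X ^ m + 1) * σ) ↔ Sparse (mk fun k => coeff k σ + coeff (k + m) σ) := by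
  have hshift : (mk fun k => coeff (k + m) ((X ^ m + 1) * σ)) =
      mk fun k => coeff k σ + coeff (k + m) σ := by
    ext k
    rw [coeff_mk, coeff_mk, add_mul, one_mul, map_add, coeff_X_pow_mul]
  refine ⟨fun h => hshift ▸ h.mk_coeff_add m, fun h => ?_⟩
  rw [eq_X_pow_mul_shift_add_trunc m ((X ^ m + 1) * σ), hshift]
  exact (h.X_pow_mul m).add (sparse_coe_polynomial _)

lemma Sparse.add_coeff_add_two_pow_mul {σ : F2⟦X⟧} {m : ℕ}
    (h : Sparse (mk fun k => coeff k σ + coeff (k + m) σ)) (q : ℕ) :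
    Sparse (mk fun k => coeff k σ + coeff (k + 2 ^ q * m) σ) := by
  induction q with
  | zero => simpa using h
  | succ q ih =>
    set τ : F2⟦X⟧ := mk fun k => coeff k σ + coeff (k + 2 ^ q * m) σ
    have hτ : (mk fun k => coeff k σ + coeff (k + 2 ^ (q + 1) * m) σ) =
        τ + mk fun k => coeff (k + 2 ^ q * m) τ := by
      ext k
      simp only [τ, coeff_mk, map_add, pow_succ, add_assoc]
      grind
    rw [hτ]
    exact ih.add (ih.mk_coeff_add _)

theorem statement16 (σ : PowerSeries F2) :
    ((∃ (ρ : PowerSeries F2) (p q : Polynomial F2), Sparse ρ ∧ p ≠ 0 ∧ q ≠ 0 ∧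
        (q : PowerSeries F2) * σ = (p : PowerSeries F2) * ρ) ↔
      ∃ m : ℕ, 1 ≤ m ∧ Sparse ((PowerSeries.X ^ m + 1) * σ)) ∧
    ((∃ m : ℕ, 1 ≤ m ∧ Sparse ((PowerSeries.X ^ m + 1) * σ)) ↔
      ∃ m : ℕ, 1 ≤ m ∧ Sparse (PowerSeries.mk fun k =>
        PowerSeries.coeff k σ + PowerSeries.coeff (k + m) σ)) ∧
    ((∃ m : ℕ, 1 ≤ m ∧ Sparse (PowerSeries.mk fun k =>
        PowerSeries.coeff k σ + PowerSeries.coeff (k + m) σ)) ↔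
      ∃ m : ℕ, 1 ≤ m ∧ ∀ q : ℕ, Sparse (PowerSeries.mk fun k =>
        PowerSeries.coeff k σ + PowerSeries.coeff (k + 2 ^ q * m) σ)) := by
  refine ⟨⟨?_, ?_⟩,
    exists_congr fun m => and_congr_right' (sparse_X_pow_add_one_mul_iff σ m), ⟨?_, ?_⟩⟩
  · rintro ⟨ρ, p, q, hρ, -, hq, h⟩
    exact exists_sparse_X_pow_add_one_mul hρ hq h
  · rintro ⟨m, hm, hs⟩
    refine ⟨_, 1, Polynomial.X ^ m + 1, hs, one_ne_zero, ?_, by simp⟩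
    simpa using Polynomial.X_pow_add_C_ne_zero hm (1 : F2)
  · rintro ⟨m, hm, hs⟩
    exact ⟨m, hm, hs.add_coeff_add_two_pow_mul⟩
  · rintro ⟨m, hm, hs⟩
    exact ⟨m, hm, by simpa using hs 0⟩
end
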